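/- Let n ≥ 1 and α ∈ (1/2, 1] with 2α < n. There exists a constant C = C(n, α) > 0 such that for every measurable F : (0,∞)×ℝ^n → [0,∞], every t > 0, and every x ∈ ℝ^n: ∫_0^t ∫_{ℝ^n} (t−s) · F(s,y) · ((t−s)^{1/(2α)} + |x−y|)^{-(n+2α)} dy ds ≤ C ∫_{ℝ^n} (ess sup_{s>0} F(s,y)) · |x−y|^{2α − n} dy, where both sides take values in [0, ∞]. -/

import Mathlib

/-!
Tonelli moves the time integral inside. For fixed `y`, bounding `F(s, y)` by its essential
supremum leaves the time integral of `u (u^{1/β} + r)^{-(d+β)}` over `u ≥ 0`, with `β = 2α`,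
`d = n` and `r = |x - y|`. Splitting at `u = r^β`, the kernel is at most `r^{-d}` below the
split and at most `u^{-d/β}` above it, which is integrable at infinity because `β < d`; together
this gives `d / (d - β) · r^{β-d}`.
-/

open MeasureTheory Set
open scoped ENNReal

abbrev Rn (n : ℕ) := EuclideanSpace ℝ (Fin n)

theorem setLIntegral_Ioc_comp_const_sub_le (f : ℝ → ℝ≥0∞) (t : ℝ) :
    ∫⁻ s in Ioc 0 t, f (t - s) ≤ ∫⁻ u in Ici 0, f u :=
  calc ∫⁻ s in Ioc 0 t, f (t - s)
      = ∫⁻ s in Ioc 0 t, (Ici 0).indicator f (t - s) :=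
        setLIntegral_congr_fun measurableSet_Ioc fun s hs =>
          (indicator_of_mem (mem_Ici.2 (sub_nonneg.2 hs.2)) f).symm
    _ ≤ ∫⁻ s, (Ici 0).indicator f (t - s) := setLIntegral_le_lintegral _ _
    _ = ∫⁻ u in Ici 0, f u := by
        rw [lintegral_sub_left_eq_self, lintegral_indicator measurableSet_Ici]

theorem lintegral_Ioi_rpow_of_lt {a c : ℝ} (ha : a < -1) (hc : 0 < c) :
    ∫⁻ u in Ioi c, ENNReal.ofReal (u ^ a) = ENNReal.ofReal (-c ^ (a + 1) / (a + 1)) := by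
  rw [← ofReal_integral_eq_lintegral_ofReal (integrableOn_Ioi_rpow_of_lt ha hc)
    (ae_restrict_of_forall_mem measurableSet_Ioi fun u hu => Real.rpow_nonneg (hc.trans hu).le a),
    integral_Ioi_rpow_of_lt ha hc]

theorem setLIntegral_mul_le_essSup_mul {α : Type*} [MeasurableSpace α] {μ : Measure α}
    {s S : Set α} (hsS : s ⊆ S) (f : α → ℝ≥0∞) {g : α → ℝ≥0∞}
    (hg : AEMeasurable g (μ.restrict s)) :
    ∫⁻ x in s, f x * g x ∂μ ≤ essSup f (μ.restrict S) * ∫⁻ x in s, g x ∂μ := by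
  have hf : ∀ᵐ x ∂μ.restrict s, f x ≤ essSup f (μ.restrict S) :=
    ae_mono (Measure.restrict_mono hsS le_rfl) (ENNReal.ae_le_essSup f)
  calc ∫⁻ x in s, f x * g x ∂μ ≤ ∫⁻ x in s, essSup f (μ.restrict S) * g x ∂μ :=
        lintegral_mono_ae (hf.mono fun x hx => mul_le_mul_left hx _)
    _ = essSup f (μ.restrict S) * ∫⁻ x in s, g x ∂μ := lintegral_const_mul'' _ hg

noncomputable def timeKernel (d β r u : ℝ) : ℝ := u * (u ^ (1 / β) + r) ^ (-(d + β))

theorem timeKernel_le_of_le_rpow {d β r u : ℝ} (hdβ : 0 ≤ d + β) (hr : 0 < r) (hu : 0 ≤ u)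
    (hub : u ≤ r ^ β) : timeKernel d β r u ≤ r ^ (-d) :=
  calc timeKernel d β r u ≤ r ^ β * r ^ (-(d + β)) :=
        mul_le_mul hub (Real.rpow_le_rpow_of_nonpos hr
            (le_add_of_nonneg_left (Real.rpow_nonneg hu _)) (neg_nonpos.2 hdβ))
          (Real.rpow_nonneg (by positivity) _) (hu.trans hub)
    _ = r ^ (-d) := by rw [← Real.rpow_add hr]; ring_nf

theorem timeKernel_le_rpow {d β r u : ℝ} (hβ : β ≠ 0) (hdβ : 0 ≤ d + β) (hr : 0 ≤ r)
    (hu : 0 < u) : timeKernel d β r u ≤ u ^ (-(d / β)) :=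
  calc timeKernel d β r u ≤ u * (u ^ (1 / β)) ^ (-(d + β)) :=
        mul_le_mul_of_nonneg_left (Real.rpow_le_rpow_of_nonpos (Real.rpow_pos_of_pos hu _)
          (le_add_of_nonneg_right hr) (neg_nonpos.2 hdβ)) hu.le
    _ = u ^ (-(d / β)) := by
        rw [← Real.rpow_mul hu.le, mul_comm, ← Real.rpow_add_one hu.ne']
        congr 1
        field_simp
        ring

theorem lintegral_Ici_timeKernel_le {d β r : ℝ} (hβ : 0 < β) (hβd : β < d) (hr : 0 < r) :
    ∫⁻ u in Ici 0, ENNReal.ofReal (timeKernel d β r u)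
      ≤ ENNReal.ofReal (d / (d - β) * r ^ (β - d)) := by
  have hdβ : 0 ≤ d + β := by linarith
  have hb : 0 < r ^ β := Real.rpow_pos_of_pos hr β
  have hnear : ∫⁻ u in Icc 0 (r ^ β), ENNReal.ofReal (timeKernel d β r u)
      ≤ ENNReal.ofReal (r ^ (β - d)) :=
    calc ∫⁻ u in Icc 0 (r ^ β), ENNReal.ofReal (timeKernel d β r u)
        ≤ ∫⁻ u in Icc 0 (r ^ β), ENNReal.ofReal (r ^ (-d)) :=
          setLIntegral_mono measurable_const fun u hu =>
            ENNReal.ofReal_le_ofReal (timeKernel_le_of_le_rpow hdβ hr hu.1 hu.2)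
      _ = ENNReal.ofReal (r ^ (β - d)) := by
          rw [setLIntegral_const, Real.volume_Icc, sub_zero, ← ENNReal.ofReal_mul (by positivity),
            ← Real.rpow_add hr, neg_add_eq_sub]
  have hexp : -(d / β) < -1 := by
    rw [neg_lt_neg_iff, one_lt_div hβ]
    exact hβd
  have hfar : ∫⁻ u in Ioi (r ^ β), ENNReal.ofReal (timeKernel d β r u)
      ≤ ENNReal.ofReal (β / (d - β) * r ^ (β - d)) :=
    calc ∫⁻ u in Ioi (r ^ β), ENNReal.ofReal (timeKernel d β r u)
        ≤ ∫⁻ u in Ioi (r ^ β), ENNReal.ofReal (u ^ (-(d / β))) :=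
          setLIntegral_mono (by fun_prop) fun u hu => ENNReal.ofReal_le_ofReal
            (timeKernel_le_rpow hβ.ne' hdβ hr.le (hb.trans hu))
      _ = ENNReal.ofReal (β / (d - β) * r ^ (β - d)) := by
          have hβd' : d - β ≠ 0 := by linarith
          have hpow : β * (-(d / β) + 1) = β - d := by field_simp; ring
          have hcoef : -(d / β) + 1 = -((d - β) / β) := by field_simp; ring
          rw [lintegral_Ioi_rpow_of_lt hexp hb, ← Real.rpow_mul hr.le, hpow, hcoef]
          congr 1
          field_simp
  calc ∫⁻ u in Ici 0, ENNReal.ofReal (timeKernel d β r u)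
      = (∫⁻ u in Icc 0 (r ^ β), ENNReal.ofReal (timeKernel d β r u))
        + ∫⁻ u in Ioi (r ^ β), ENNReal.ofReal (timeKernel d β r u) := by
        rw [← Icc_union_Ioi_eq_Ici hb.le,
          lintegral_union measurableSet_Ioi
            ((Iic_disjoint_Ioi le_rfl).mono_left Icc_subset_Iic_self)]
    _ ≤ ENNReal.ofReal (r ^ (β - d)) + ENNReal.ofReal (β / (d - β) * r ^ (β - d)) :=
        add_le_add hnear hfar
    _ = ENNReal.ofReal (d / (d - β) * r ^ (β - d)) := by
        have : d - β ≠ 0 := by linarith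
        rw [← ENNReal.ofReal_add (by positivity) (by bound)]
        congr 1
        field_simp
        ring

theorem setLIntegral_Ioc_mul_timeKernel_le {d β r : ℝ} (hβ : 0 < β) (hβd : β < d)
    (hr : 0 < r) (f : ℝ → ℝ≥0∞) (t : ℝ) :
    ∫⁻ s in Ioc 0 t, ENNReal.ofReal (t - s) * f s
        * ENNReal.ofReal (((t - s) ^ (1 / β) + r) ^ (-(d + β)))
      ≤ ENNReal.ofReal (d / (d - β))
        * (essSup f (volume.restrict (Ioi 0)) * ENNReal.ofReal (r ^ (β - d))) :=
  calc _ = ∫⁻ s in Ioc 0 t, f s * ENNReal.ofReal (timeKernel d β r (t - s)) :=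
        setLIntegral_congr_fun measurableSet_Ioc fun s hs => by
          rw [timeKernel, ENNReal.ofReal_mul (sub_nonneg.2 hs.2)]
          ring
    _ ≤ essSup f (volume.restrict (Ioi 0))
          * ∫⁻ s in Ioc 0 t, ENNReal.ofReal (timeKernel d β r (t - s)) :=
        setLIntegral_mul_le_essSup_mul Ioc_subset_Ioi_self f (by unfold timeKernel; fun_prop)
    _ ≤ essSup f (volume.restrict (Ioi 0)) * ENNReal.ofReal (d / (d - β) * r ^ (β - d)) := by
        gcongr
        exact (setLIntegral_Ioc_comp_const_sub_le _ t).trans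
          (lintegral_Ici_timeKernel_le hβ hβd hr)
    _ = _ := by
        rw [ENNReal.ofReal_mul (div_nonneg (hβ.trans hβd).le (sub_pos.2 hβd).le)]
        ring

theorem stmt17_general (n : ℕ) (α : ℝ) (hα : 1/2 < α ∧ α ≤ 1) (h2α : 2 * α < n) :
    ∃ C > (0:ℝ), ∀ F : ℝ → Rn n → ℝ≥0∞, Measurable (Function.uncurry F) →
      ∀ t > (0:ℝ), ∀ x : Rn n,
      (∫⁻ s in Ioc (0:ℝ) t, ∫⁻ y, ENNReal.ofReal (t - s) * F s y
          * ENNReal.ofReal (((t - s) ^ (1 / (2 * α)) + ‖x - y‖) ^ (-((n:ℝ) + 2 * α))))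
        ≤ ENNReal.ofReal C * ∫⁻ y,
            essSup (fun s => F s y) (volume.restrict (Ioi (0:ℝ)))
              * ENNReal.ofReal (‖x - y‖ ^ (2 * α - (n:ℝ))) := by
  have hβ : 0 < 2 * α := by linarith [hα.1]
  have : Nonempty (Fin n) := Fin.pos_iff_nonempty.1 (by exact_mod_cast hβ.trans h2α)
  refine ⟨n / (n - 2 * α), div_pos (hβ.trans h2α) (sub_pos.2 h2α), fun F hF t _ x => ?_⟩
  have hmeas : Measurable fun p : ℝ × Rn n => ENNReal.ofReal (t - p.1) * F p.1 p.2
      * ENNReal.ofReal (((t - p.1) ^ (1 / (2 * α)) + ‖x - p.2‖) ^ (-((n:ℝ) + 2 * α))) :=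
    ((by fun_prop : Measurable fun p : ℝ × Rn n => ENNReal.ofReal (t - p.1)).mul hF).mul
      (by fun_prop)
  -- On the diagonal `y = x` the time integral diverges while `0 ^ (2α - n) = 0` in Lean.
  have hoff_diag : ∀ᵐ y : Rn n, y ≠ x := measure_eq_zero_iff_ae_notMem.1 (measure_singleton x)
  rw [lintegral_lintegral_swap hmeas.aemeasurable,
    ← lintegral_const_mul' _ _ ENNReal.ofReal_ne_top]
  refine lintegral_mono_ae (hoff_diag.mono fun y hy => ?_)
  exact setLIntegral_Ioc_mul_timeKernel_le hβ h2α (norm_pos_iff.2 (sub_ne_zero.2 hy.symm)) _ t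

/-- Control of the space-time kernel integral (γ = 0 kernel decay) by the Riesz potential
of order `2α` of `y ↦ ess sup_{s>0} F(s,y)`. -/
theorem stmt17 (n : ℕ) (hn : 1 ≤ n) (α : ℝ) (hα : 1/2 < α ∧ α ≤ 1) (h2α : 2 * α < n) :
    ∃ C > (0:ℝ), ∀ F : ℝ → Rn n → ℝ≥0∞, Measurable (Function.uncurry F) →
      ∀ t > (0:ℝ), ∀ x : Rn n,
      (∫⁻ s in Ioc (0:ℝ) t, ∫⁻ y, ENNReal.ofReal (t - s) * F s y
          * ENNReal.ofReal (((t - s) ^ (1 / (2 * α)) + ‖x - y‖) ^ (-((n:ℝ) + 2 * α))))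
        ≤ ENNReal.ofReal C * ∫⁻ y,
            essSup (fun s => F s y) (volume.restrict (Ioi (0:ℝ)))
              * ENNReal.ofReal (‖x - y‖ ^ (2 * α - (n:ℝ))) :=
  stmt17_general n α hα h2α
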